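/- For every integer h ≥ 1: for each real ε > 0 and every integer d ≥ 0 there exists k such that C⟨h,k⟩ is not fractionally (h−ε)-colourable with defect d. Consequently, the fractional defective chromatic number of the family {C⟨h,k⟩ : k ∈ ℕ} is at least h. -/

import Mathlib

/-- Vertices of the complete `k`-ary tree of depth `h`. -/
def CVert (h k : ℕ) : Type := {l : List (Fin k) // l.length < h}

/-- `C⟨h,k⟩`, the closure of the complete `k`-ary tree of depth `h`. -/
def Cgraph (h k : ℕ) : SimpleGraph (CVert h k) where
  Adj a b := a ≠ b ∧ (a.1 <+: b.1 ∨ b.1 <+: a.1)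
  symm := ⟨fun _ _ ⟨hne, hp⟩ => ⟨hne.symm, hp.symm⟩⟩
  loopless := ⟨fun _ ⟨hne, _⟩ => hne rfl⟩

open scoped Classical in
/-- `G` is fractionally `t`-colourable with defect `d`. -/
def FracDefect {V : Type*} (G : SimpleGraph V) (t : ℝ) (d : ℝ) : Prop :=
  ∃ (s : ℕ) (Y : Fin s → Set V) (α : Fin s → ℝ),
    (∀ i, 0 ≤ α i ∧ α i ≤ 1) ∧
    (∀ i, ∀ v ∈ Y i, ∀ S : Finset V,
      (∀ u ∈ S, u ∈ Y i ∧ G.Adj v u) → (S.card : ℝ) ≤ d) ∧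
    (∑ i, α i) ≤ t ∧
    (∀ v : V, 1 ≤ ∑ i, if v ∈ Y i then α i else 0)

/-! Induction on `h`. In a fractional colouring of `C⟨h+1,k⟩` of weight `t`, the classes through
the root have total weight at least `1`, and each of them, having defect `d`, meets at most `d` of
the `k` child subtrees. So once `k δ ≥ d t`, some child subtree, a copy of `C⟨h,k⟩`, meets the
root classes with total weight at most `δ`. The other classes, of total weight at most `t - 1`,
cover each of its vertices with weight at least `1 - δ`, so `C⟨h,k⟩` is fractionally
`(t - 1) / (1 - δ)`-colourable with defect `d`; for `t < h + 1` and small `δ` this is below `h`. -/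

open Filter Topology Finset
open scoped Classical

variable {V W : Type*} {G : SimpleGraph V} {H : SimpleGraph W} {t d δ : ℝ}

def SimpleGraph.IsDefectSet (G : SimpleGraph V) (d : ℝ) (Y : Set V) : Prop :=
  ∀ v ∈ Y, ∀ S : Finset V, (∀ u ∈ S, u ∈ Y ∧ G.Adj v u) → (#S : ℝ) ≤ d

theorem SimpleGraph.IsDefectSet.preimage {Y : Set V} (hY : G.IsDefectSet d Y)
    (f : H →g G) (hf : Function.Injective f) : H.IsDefectSet d (f ⁻¹' Y) := by
  intro v hv S hS
  rw [← card_image_of_injective S hf]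
  refine hY (f v) hv _ fun u hu => ?_
  obtain ⟨w, hw, rfl⟩ := mem_image.1 hu
  exact ⟨(hS w hw).1, f.map_adj (hS w hw).2⟩

theorem FracDefect.nonneg (hG : FracDefect G t d) : 0 ≤ t := by
  obtain ⟨s, Y, α, hα, -, hsum, -⟩ := hG
  exact (sum_nonneg fun i _ => (hα i).1).trans hsum

/-- A class of weight `β` is repeated `N` times with weight `β / N`. -/
theorem FracDefect.of_weights {ι : Type*} [Fintype ι] (Y : ι → Set V) (β : ι → ℝ)
    (hβ : ∀ i, 0 ≤ β i) (hY : ∀ i, G.IsDefectSet d (Y i)) (hsum : ∑ i, β i ≤ t)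
    (hcov : ∀ v, 1 ≤ ∑ i, if v ∈ Y i then β i else 0) : FracDefect G t d := by
  obtain ⟨N, hN⟩ := exists_nat_gt (∑ i, β i)
  have hN0 : (0 : ℝ) < N := (sum_nonneg fun i _ => hβ i).trans_lt hN
  let e := Fintype.equivFin (ι × Fin N)
  have sum_copies : ∀ F : ι → ℝ, ∑ j, F (e.symm j).1 / N = ∑ i, F i := by
    intro F
    rw [e.symm.sum_comp (fun p => F p.1 / N), Fintype.sum_prod_type]
    simp only [sum_const, card_univ, Fintype.card_fin, nsmul_eq_mul]
    exact sum_congr rfl fun i _ => by field_simp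
  refine ⟨_, fun j => Y (e.symm j).1, fun j => β (e.symm j).1 / N, fun j => ⟨?_, ?_⟩,
    fun j => hY _, (sum_copies β).trans_le hsum, fun v => ?_⟩
  · exact div_nonneg (hβ _) hN0.le
  · rw [div_le_one hN0]
    exact ((single_le_sum (fun i _ => hβ i) (mem_univ _)).trans_lt hN).le
  · convert hcov v using 1
    rw [← sum_copies]
    exact sum_congr rfl fun j _ => by split_ifs <;> simp

/-- Dropping the classes through `r` saves weight at least `1`; on the image of `f` they carry
weight at most `δ`, so the remaining classes, rescaled by `1 / (1 - δ)`, still cover `H`. -/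
theorem FracDefect.comap_of_root_classes_le (f : H →g G) (hf : Function.Injective f) (r : V)
    {s : ℕ} (Y : Fin s → Set V) (α : Fin s → ℝ) (hα : ∀ i, 0 ≤ α i)
    (hY : ∀ i, G.IsDefectSet d (Y i)) (hsum : ∑ i, α i ≤ t)
    (hcov : ∀ v, 1 ≤ ∑ i, if v ∈ Y i then α i else 0) (hδ : δ < 1)
    (hr : ∑ i, (if r ∈ Y i ∧ ∃ w, f w ∈ Y i then α i else 0) ≤ δ) :
    FracDefect H ((t - 1) / (1 - δ)) d := by
  have hδ' : 0 < 1 - δ := sub_pos.2 hδ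
  set β : Fin s → ℝ := fun i => if r ∈ Y i then 0 else α i / (1 - δ)
  refine .of_weights (fun i => f ⁻¹' Y i) β (fun i => ?_) (fun i => (hY i).preimage f hf)
    ?_ fun w => ?_
  · dsimp only [β]
    split_ifs
    exacts [le_rfl, div_nonneg (hα i) hδ'.le]
  · have split_root : ∀ i, α i = (if r ∈ Y i then α i else 0) + (1 - δ) * β i := fun i => by
      dsimp only [β]; split_ifs <;> simp [mul_div_cancel₀ _ hδ'.ne']
    rw [le_div_iff₀ hδ', mul_comm, mul_sum]
    have := hcov r
    rw [sum_congr rfl fun i _ => split_root i, sum_add_distrib] at hsum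
    linarith
  · have cover_le : ∀ i, (if f w ∈ Y i then α i else 0) ≤
        (if r ∈ Y i ∧ ∃ w, f w ∈ Y i then α i else 0) +
          (1 - δ) * if w ∈ f ⁻¹' Y i then β i else 0 := fun i => by
      dsimp only [β, Set.mem_preimage]
      split_ifs <;> simp_all [mul_div_cancel₀ _ hδ'.ne']
    have := (hcov (f w)).trans (sum_le_sum fun i _ => cover_le i)
    rw [sum_add_distrib, ← mul_sum] at this
    nlinarith

namespace Cgraph

variable {n k : ℕ}

def root : CVert (n + 1) k := ⟨[], n.succ_pos⟩

def cons (c : Fin k) (v : CVert n k) : CVert (n + 1) k :=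
  ⟨c :: v.1, Nat.succ_lt_succ v.2⟩

theorem cons_injective (c : Fin k) : Function.Injective (cons (n := n) c) :=
  fun _ _ h => Subtype.ext (List.cons_injective (congrArg Subtype.val h))

theorem root_adj_cons (c : Fin k) (v : CVert n k) : (Cgraph (n + 1) k).Adj root (cons c v) :=
  ⟨fun h => List.cons_ne_nil c v.1 (congrArg Subtype.val h).symm, .inl List.nil_prefix⟩

def consHom (c : Fin k) : Cgraph n k →g Cgraph (n + 1) k where
  toFun := cons c
  map_rel' := fun ⟨hne, hp⟩ =>
    ⟨(cons_injective c).ne hne, hp.imp (List.prefix_cons_inj c).2 (List.prefix_cons_inj c).2⟩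

/-- The root has a neighbour in `Y` below each child whose subtree meets `Y`. -/
theorem card_children_meeting_le {Y : Set (CVert (n + 1) k)}
    (hY : (Cgraph (n + 1) k).IsDefectSet d Y) (hroot : root ∈ Y) :
    (#{c | ∃ v, cons c v ∈ Y} : ℝ) ≤ d := by
  set T : Finset (Fin k) := {c | ∃ v, cons c v ∈ Y}
  have hT : ∀ c ∈ T, ∃ v, cons c v ∈ Y := fun c hc => (mem_filter.1 hc).2
  choose w hw using hT
  have hinj : Function.Injective fun c : T => cons c.1 (w c.1 c.2) := fun a b h =>
    Subtype.ext (List.cons.inj (congrArg Subtype.val h)).1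
  rw [← card_attach, ← card_image_of_injective _ hinj]
  refine hY root hroot _ fun u hu => ?_
  obtain ⟨c, -, rfl⟩ := mem_image.1 hu
  exact ⟨hw c.1 c.2, root_adj_cons _ _⟩

theorem exists_child_root_classes_le (hk : 0 < k) (hd : 0 ≤ d) {s : ℕ}
    (Y : Fin s → Set (CVert (n + 1) k)) (α : Fin s → ℝ) (hα : ∀ i, 0 ≤ α i)
    (hY : ∀ i, (Cgraph (n + 1) k).IsDefectSet d (Y i)) (hkδ : d * ∑ i, α i ≤ k * δ) :
    ∃ c, ∑ i, (if root ∈ Y i ∧ ∃ v, cons c v ∈ Y i then α i else 0) ≤ δ := by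
  have per_class : ∀ i, ∑ c : Fin k, (if root ∈ Y i ∧ ∃ v, cons c v ∈ Y i then α i else 0)
      ≤ d * α i := fun i => by
    by_cases hi : root ∈ Y i
    · simp only [hi, true_and]
      rw [← sum_filter, sum_const, nsmul_eq_mul]
      exact mul_le_mul_of_nonneg_right (card_children_meeting_le (hY i) hi) (hα i)
    · simp only [hi, false_and, if_false, sum_const_zero]
      exact mul_nonneg hd (hα i)
  obtain ⟨c, -, hc⟩ := exists_le_of_sum_le (univ_nonempty_iff.2 ⟨⟨0, hk⟩⟩) <| calc
    ∑ c : Fin k, ∑ i, (if root ∈ Y i ∧ ∃ v, cons c v ∈ Y i then α i else 0)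
      = ∑ i, ∑ c : Fin k, (if root ∈ Y i ∧ ∃ v, cons c v ∈ Y i then α i else 0) := sum_comm
    _ ≤ d * ∑ i, α i := by rw [mul_sum]; exact sum_le_sum fun i _ => per_class i
    _ ≤ ∑ _c : Fin k, δ := by simpa using hkδ
  exact ⟨c, hc⟩

theorem fracDefect_of_succ (hk : 0 < k) (hd : 0 ≤ d) (hδ : δ < 1) (hkδ : d * t ≤ k * δ)
    (hG : FracDefect (Cgraph (n + 1) k) t d) :
    FracDefect (Cgraph n k) ((t - 1) / (1 - δ)) d := by
  obtain ⟨s, Y, α, hα, hY, hsum, hcov⟩ := hG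
  obtain ⟨c, hc⟩ := exists_child_root_classes_le hk hd Y α (fun i => (hα i).1) hY
    ((mul_le_mul_of_nonneg_left hsum hd).trans hkδ)
  exact .comap_of_root_classes_le (consHom c) (cons_injective c) root Y α (fun i => (hα i).1)
    hY hsum hcov hδ hc

theorem eventually_not_fracDefect (hd : 0 ≤ d) (n : ℕ) :
    ∀ t : ℝ, t < n → ∀ᶠ k in atTop, ¬ FracDefect (Cgraph n k) t d := by
  induction n with
  | zero => exact fun t ht => .of_forall fun k hG => ht.not_ge (by exact_mod_cast hG.nonneg)
  | succ n ih =>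
    intro t ht
    have hlim : Tendsto (fun δ : ℝ => (t - 1) / (1 - δ)) (𝓝[>] 0) (𝓝 (t - 1)) := by
      have : ContinuousAt (fun δ : ℝ => (t - 1) / (1 - δ)) 0 := by fun_prop (disch := norm_num)
      simpa using this.tendsto.mono_left nhdsWithin_le_nhds
    have hlt : ∀ᶠ δ in 𝓝[>] 0, (t - 1) / (1 - δ) < n :=
      hlim.eventually_lt_const (by push_cast at ht; linarith)
    have hδ_lt_one : ∀ᶠ δ : ℝ in 𝓝[>] 0, δ < 1 :=
      eventually_nhdsWithin_of_eventually_nhds (eventually_lt_nhds one_pos)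
    obtain ⟨δ, ⟨hδn, hδ1⟩, hδ0⟩ := ((hlt.and hδ_lt_one).and self_mem_nhdsWithin).exists
    filter_upwards [ih _ hδn, eventually_ge_atTop 1, eventually_ge_atTop ⌈d * t / δ⌉₊]
      with k hk hk1 hkδ hG
    refine hk (fracDefect_of_succ hk1 hd hδ1 ?_ hG)
    rwa [Nat.ceil_le, div_le_iff₀ hδ0] at hkδ

end Cgraph

theorem stmt11_general (h : ℕ) :
    (∀ ε : ℝ, 0 < ε → ∀ d : ℕ, ∃ k : ℕ, 1 ≤ k ∧
      ¬ FracDefect (Cgraph h k) ((h : ℝ) - ε) (d : ℝ)) ∧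
    (∀ t : ℝ, (∃ d : ℕ, ∀ k : ℕ, FracDefect (Cgraph h k) t (d : ℝ)) →
      (h : ℝ) ≤ t) := by
  have key (d : ℕ) := Cgraph.eventually_not_fracDefect (d := d) d.cast_nonneg h
  refine ⟨fun ε hε d => ?_, fun t ⟨d, hd⟩ => ?_⟩
  · obtain ⟨k, hk, hk1⟩ := ((key d _ (sub_lt_self _ hε)).and (eventually_ge_atTop 1)).exists
    exact ⟨k, hk1, hk⟩
  · by_contra! ht
    obtain ⟨k, hk⟩ := (key d t ht).exists
    exact hk (hd k)

/-- For each `ε > 0` and defect `d` there is `k` such that `C⟨h,k⟩` is not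
fractionally `(h-ε)`-colourable with defect `d`; consequently the fractional
defective chromatic number of the family `{C⟨h,k⟩ : k ∈ ℕ}` is at least `h`. -/
theorem stmt11 (h : ℕ) (hh : 1 ≤ h) :
    (∀ ε : ℝ, 0 < ε → ∀ d : ℕ, ∃ k : ℕ, 1 ≤ k ∧
      ¬ FracDefect (Cgraph h k) ((h : ℝ) - ε) (d : ℝ)) ∧
    (∀ t : ℝ, (∃ d : ℕ, ∀ k : ℕ, FracDefect (Cgraph h k) t (d : ℝ)) →
      (h : ℝ) ≤ t) :=
  stmt11_general h
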